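/- Let ρ be a d×d density matrix and t ≥ 0. Then there exists a positive semidefinite d×d matrix τ with Δτ = Δρ such that ρ + t·τ is diagonal, if and only if ρ ⪯ (1+t)·Δρ. Consequently the Δ-robustness of coherence satisfies C_{Δ,R}(ρ) = inf{ t ≥ 0 | ρ ⪯ (1+t)·Δρ }. -/

import Mathlib

open Matrix BigOperators
open scoped Kronecker Classical ComplexOrder

/-- The qubit state with Bloch vector `(rx, ry, rz)`:
`ρ = (1/2)(I + rx σx + ry σy + rz σz)`. -/
noncomputable def blochState (rx ry rz : ℝ) : Matrix (Fin 2) (Fin 2) ℂ :=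
  !![(1 + rz : ℂ)/2, ((rx : ℂ) - ry * Complex.I)/2;
     ((rx : ℂ) + ry * Complex.I)/2, (1 - rz : ℂ)/2]

/-- `K` is an incoherent Kraus operator: every column has at most one nonzero entry. -/
def IsIncoherentKraus {d : ℕ} (K : Matrix (Fin d) (Fin d) ℂ) : Prop :=
  ∀ j i i', K i j ≠ 0 → K i' j ≠ 0 → i = i'

/-- `K` is a strictly incoherent Kraus operator: every row and every column
has at most one nonzero entry. -/
def IsSIKraus {d : ℕ} (K : Matrix (Fin d) (Fin d) ℂ) : Prop :=
  (∀ i j j', K i j ≠ 0 → K i j' ≠ 0 → j = j') ∧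
  (∀ j i i', K i j ≠ 0 → K i' j ≠ 0 → i = i')

/-- Partial trace over the first (A) factor. -/
noncomputable def ptraceA {dA dB : ℕ} (X : Matrix (Fin dA × Fin dB) (Fin dA × Fin dB) ℂ) :
    Matrix (Fin dB) (Fin dB) ℂ :=
  fun j j' => ∑ i, X (i, j) (i, j')

/-- Partial trace over the second (B) factor. -/
noncomputable def ptraceB {dA dB : ℕ} (X : Matrix (Fin dA × Fin dB) (Fin dA × Fin dB) ℂ) :
    Matrix (Fin dA) (Fin dA) ℂ :=
  fun i i' => ∑ j, X (i, j) (i', j)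

/-- The completely dephasing map: keep the diagonal of `X`. -/
noncomputable def dephase {d : ℕ} (X : Matrix (Fin d) (Fin d) ℂ) : Matrix (Fin d) (Fin d) ℂ :=
  Matrix.diagonal X.diag

/-- The Δ-robustness of coherence:
`C_{Δ,R}(ρ) = inf{ t ≥ 0 | ∃ τ ⪰ 0, Δτ = Δρ, ρ + tτ diagonal }`. -/
noncomputable def CDR {d : ℕ} (ρ : Matrix (Fin d) (Fin d) ℂ) : ℝ :=
  sInf {t : ℝ | 0 ≤ t ∧ ∃ τ : Matrix (Fin d) (Fin d) ℂ,
    τ.PosSemidef ∧ dephase τ = dephase ρ ∧ (ρ + (t : ℂ) • τ).IsDiag}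

/-! If `Δτ = Δρ` and `ρ + tτ` is diagonal, then `ρ + tτ = Δ(ρ + tτ) = (1 + t)Δρ`, so
`(1 + t)Δρ - ρ = tτ ⪰ 0`. Conversely, for `t > 0` the matrix `τ = t⁻¹((1 + t)Δρ - ρ)` is a witness;
for `t = 0` the matrix `Δρ - ρ` is positive semidefinite with trace zero, hence zero, so `ρ` is
diagonal and is its own witness. -/

section Dephase

variable {d : ℕ}

lemma isDiag_dephase (X : Matrix (Fin d) (Fin d) ℂ) : (dephase X).IsDiag :=
  isDiag_diagonal X.diag

lemma dephase_eq_self_of_isDiag {X : Matrix (Fin d) (Fin d) ℂ} (h : X.IsDiag) : dephase X = X :=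
  h.diagonal_diag

lemma dephase_dephase (X : Matrix (Fin d) (Fin d) ℂ) : dephase (dephase X) = dephase X :=
  dephase_eq_self_of_isDiag (isDiag_dephase X)

lemma dephase_add (X Y : Matrix (Fin d) (Fin d) ℂ) :
    dephase (X + Y) = dephase X + dephase Y :=
  (diagonal_add _ _).symm

lemma dephase_sub (X Y : Matrix (Fin d) (Fin d) ℂ) :
    dephase (X - Y) = dephase X - dephase Y :=
  (diagonal_sub _ _).symm

lemma dephase_smul (c : ℂ) (X : Matrix (Fin d) (Fin d) ℂ) : dephase (c • X) = c • dephase X := by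
  simp only [dephase, diag_smul, diagonal_smul]

lemma trace_dephase (X : Matrix (Fin d) (Fin d) ℂ) : (dephase X).trace = X.trace := by
  simp [dephase, trace]

lemma eq_dephase_of_posSemidef_dephase_sub {ρ : Matrix (Fin d) (Fin d) ℂ}
    (h : (dephase ρ - ρ).PosSemidef) : ρ = dephase ρ := by
  have htrace : (dephase ρ - ρ).trace = 0 := by rw [trace_sub, trace_dephase, sub_self]
  exact (sub_eq_zero.mp (h.trace_eq_zero_iff.mp htrace)).symm

end Dephase

section Witness

variable {d : ℕ} {ρ τ : Matrix (Fin d) (Fin d) ℂ}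

lemma posSemidef_ofReal_smul {t : ℝ} (ht : 0 ≤ t) (hτ : τ.PosSemidef) :
    ((t : ℂ) • τ).PosSemidef :=
  hτ.smul (Complex.zero_le_real.mpr ht)

lemma add_smul_eq_smul_dephase {t : ℂ} (hΔ : dephase τ = dephase ρ) (hdiag : (ρ + t • τ).IsDiag) :
    ρ + t • τ = (1 + t) • dephase ρ := by
  rw [← dephase_eq_self_of_isDiag hdiag, dephase_add, dephase_smul, hΔ, add_smul, one_smul]

lemma posSemidef_smul_dephase_sub_of_witness {t : ℝ} (ht : 0 ≤ t) (hτ : τ.PosSemidef)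
    (hΔ : dephase τ = dephase ρ) (hdiag : (ρ + (t : ℂ) • τ).IsDiag) :
    (((1 + t : ℝ) : ℂ) • dephase ρ - ρ).PosSemidef := by
  have h : ((1 + t : ℝ) : ℂ) • dephase ρ - ρ = (t : ℂ) • τ := by
    rw [Complex.ofReal_add, Complex.ofReal_one, ← add_smul_eq_smul_dephase hΔ hdiag,
      add_sub_cancel_left]
  exact h ▸ posSemidef_ofReal_smul ht hτ

lemma exists_witness_of_posSemidef_smul_dephase_sub (hρ : ρ.PosSemidef) {t : ℝ} (ht : 0 ≤ t)
    (h : (((1 + t : ℝ) : ℂ) • dephase ρ - ρ).PosSemidef) :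
    ∃ τ : Matrix (Fin d) (Fin d) ℂ,
      τ.PosSemidef ∧ dephase τ = dephase ρ ∧ (ρ + (t : ℂ) • τ).IsDiag := by
  rcases ht.eq_or_lt with rfl | htpos
  · have hdiag : ρ = dephase ρ :=
      eq_dephase_of_posSemidef_dephase_sub (by simpa using h)
    refine ⟨ρ, hρ, rfl, ?_⟩
    simpa [← hdiag] using isDiag_dephase ρ
  · have htC : (t : ℂ) ≠ 0 := Complex.ofReal_ne_zero.mpr htpos.ne'
    have hsum : ρ + (t : ℂ) • ((t : ℂ)⁻¹ • (((1 + t : ℝ) : ℂ) • dephase ρ - ρ)) =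
        ((1 + t : ℝ) : ℂ) • dephase ρ := by
      rw [smul_inv_smul₀ htC, add_sub_cancel]
    refine ⟨(t : ℂ)⁻¹ • (((1 + t : ℝ) : ℂ) • dephase ρ - ρ), ?_, ?_, ?_⟩
    · rw [← Complex.ofReal_inv]
      exact posSemidef_ofReal_smul (inv_nonneg.mpr ht) h
    · rw [dephase_smul, dephase_sub, dephase_smul, dephase_dephase, Complex.ofReal_add,
        Complex.ofReal_one, add_smul, one_smul, add_sub_cancel_left, inv_smul_smul₀ htC]
    · rw [hsum]
      exact (isDiag_dephase ρ).smul _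

lemma exists_witness_iff_posSemidef_smul_dephase_sub (hρ : ρ.PosSemidef) {t : ℝ} (ht : 0 ≤ t) :
    (∃ τ : Matrix (Fin d) (Fin d) ℂ,
        τ.PosSemidef ∧ dephase τ = dephase ρ ∧ (ρ + (t : ℂ) • τ).IsDiag) ↔
      (((1 + t : ℝ) : ℂ) • dephase ρ - ρ).PosSemidef :=
  ⟨fun ⟨_, hτ, hΔ, hdiag⟩ => posSemidef_smul_dephase_sub_of_witness ht hτ hΔ hdiag,
    exists_witness_of_posSemidef_smul_dephase_sub hρ ht⟩

end Witness

theorem CDR_simplified_general (d : ℕ) (ρ : Matrix (Fin d) (Fin d) ℂ)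
    (hρ : ρ.PosSemidef) (t : ℝ) (ht : 0 ≤ t) :
    ((∃ τ : Matrix (Fin d) (Fin d) ℂ,
        τ.PosSemidef ∧ dephase τ = dephase ρ ∧ (ρ + (t : ℂ) • τ).IsDiag) ↔
      (((1 + t : ℝ) : ℂ) • dephase ρ - ρ).PosSemidef) ∧
    CDR ρ = sInf {s : ℝ | 0 ≤ s ∧ (((1 + s : ℝ) : ℂ) • dephase ρ - ρ).PosSemidef} :=
  ⟨exists_witness_iff_posSemidef_smul_dephase_sub hρ ht,
    congrArg sInf <| Set.ext fun _ =>
      and_congr_right fun hs => exists_witness_iff_posSemidef_smul_dephase_sub hρ hs⟩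

/-- For a density matrix `ρ` and `t ≥ 0`, a witness `τ ⪰ 0` with `Δτ = Δρ` and
`ρ + tτ` diagonal exists iff `ρ ⪯ (1+t)Δρ`; consequently
`C_{Δ,R}(ρ) = inf{ t ≥ 0 | ρ ⪯ (1+t)Δρ }`. -/
theorem CDR_simplified (d : ℕ) (ρ : Matrix (Fin d) (Fin d) ℂ)
    (hρ : ρ.PosSemidef) (htr : ρ.trace = 1) (t : ℝ) (ht : 0 ≤ t) :
    ((∃ τ : Matrix (Fin d) (Fin d) ℂ,
        τ.PosSemidef ∧ dephase τ = dephase ρ ∧ (ρ + (t : ℂ) • τ).IsDiag) ↔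
      (((1 + t : ℝ) : ℂ) • dephase ρ - ρ).PosSemidef) ∧
    CDR ρ = sInf {s : ℝ | 0 ≤ s ∧ (((1 + s : ℝ) : ℂ) • dephase ρ - ρ).PosSemidef} :=
  CDR_simplified_general d ρ hρ t ht
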